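/- Let k ≥ 2 and let P be a finite poset excluding k+k, with height h and maximum chain C = {c_1 < … < c_h}. If every convex subposet Q of P of height at most 2k−2 satisfies dim(Q) ≤ d_0, then there exists a family of at most 2d_0 linear extensions of P reversing every safe incomparable pair of P. -/

import Mathlib

variable {α : Type*}

/-- A linear extension of a partial order, given as a binary relation. -/
def IsLinExt [PartialOrder α] (r : α → α → Prop) : Prop :=
  IsLinearOrder α r ∧ ∀ x y : α, x ≤ y → r x y

/-- A realizer: a family of linear extensions whose intersection is the order. -/
def IsRealizer [PartialOrder α] {d : ℕ} (L : Fin d → α → α → Prop) : Prop :=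
  (∀ i, IsLinExt (L i)) ∧ ∀ x y : α, x ≤ y ↔ ∀ i, L i x y

/-- The order dimension of a poset: the least positive `d` admitting a realizer of size `d`. -/
noncomputable def pdim (α : Type*) [PartialOrder α] : ℕ :=
  sInf {d | 0 < d ∧ ∃ L : Fin d → α → α → Prop, IsRealizer L}

/-- The set of (ordered) incomparable pairs of a poset. -/
def IncPairs (α : Type*) [PartialOrder α] : Set (α × α) :=
  {p | ¬ p.1 ≤ p.2 ∧ ¬ p.2 ≤ p.1}

/-- `r` reverses every pair `(x, y)` in `S`, i.e. `x > y` in `r`. -/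
def Reverses [PartialOrder α] (r : α → α → Prop) (S : Set (α × α)) : Prop :=
  ∀ p ∈ S, r p.2 p.1 ∧ ¬ r p.1 p.2

/-- A set of incomparable pairs is reversible if some linear extension reverses all of them. -/
def Reversible [PartialOrder α] (S : Set (α × α)) : Prop :=
  ∃ r, IsLinExt r ∧ Reverses r S

/-- `d` linear extensions suffice to reverse every pair of `S` (i.e. `dim S ≤ d`). -/
def RealizerOn [PartialOrder α] (d : ℕ) (S : Set (α × α)) : Prop :=
  ∃ L : Fin d → α → α → Prop, (∀ i, IsLinExt (L i)) ∧
    ∀ p ∈ S, ∃ i, L i p.2 p.1 ∧ ¬ L i p.1 p.2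

/-- The height of a subset of a poset: the maximum size of a chain contained in it. -/
noncomputable def heightSet [PartialOrder α] (S : Set α) : ℕ :=
  sSup {n | ∃ t : Finset α, ↑t ⊆ S ∧ IsChain (· ≤ ·) (↑t : Set α) ∧ t.card = n}

/-- The height of a poset: the maximum size of a chain. -/
noncomputable def pheight (α : Type*) [PartialOrder α] : ℕ :=
  heightSet (Set.univ : Set α)

/-- The poset `k + k`: the disjoint sum of two `k`-element chains. -/
def TwoChains (k : ℕ) : Type := Fin k ⊕ Fin k

def TwoChains.le {k : ℕ} : TwoChains k → TwoChains k → Prop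
  | .inl i, .inl j => i.1 ≤ j.1
  | .inr i, .inr j => i.1 ≤ j.1
  | _, _ => False

theorem TwoChains.le_refl' {k : ℕ} (x : TwoChains k) : TwoChains.le x x := by
  cases x <;> simp [TwoChains.le]

theorem TwoChains.le_trans' {k : ℕ} (x y z : TwoChains k)
    (hxy : TwoChains.le x y) (hyz : TwoChains.le y z) : TwoChains.le x z := by
  cases x <;> cases y <;> cases z <;> simp_all [TwoChains.le] <;> omega

theorem TwoChains.le_antisymm' {k : ℕ} (x y : TwoChains k)
    (hxy : TwoChains.le x y) (hyx : TwoChains.le y x) : x = y := by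
  cases x <;> cases y <;> simp_all [TwoChains.le] <;>
    exact congrArg _ (le_antisymm hxy hyx)

instance (k : ℕ) : PartialOrder (TwoChains k) where
  le := TwoChains.le
  le_refl := TwoChains.le_refl'
  le_trans := TwoChains.le_trans'
  le_antisymm := TwoChains.le_antisymm'

/-- Given a chain `c : Fin h → α` (listing `c_1 < ⋯ < c_h`), `dnN c z` is the greatest
1-based index `i` with `c_i ≤ z`, and `0` if there is none. -/
noncomputable def dnN [PartialOrder α] {h : ℕ} (c : Fin h → α) (z : α) : ℕ :=
  {i : Fin h | c i ≤ z}.ncard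

/-- `upN c z` is the least 1-based index `j` with `z ≤ c_j`, and `h + 1` if there is none. -/
noncomputable def upN [PartialOrder α] {h : ℕ} (c : Fin h → α) (z : α) : ℕ :=
  h + 1 - {i : Fin h | z ≤ c i}.ncard

/-- A pair `(x, y)` is dangerous when `dn(x) < dn(y) < up(x) < up(y)`. -/
def Dangerous [PartialOrder α] {h : ℕ} (c : Fin h → α) (p : α × α) : Prop :=
  dnN c p.1 < dnN c p.2 ∧ dnN c p.2 < upN c p.1 ∧ upN c p.1 < upN c p.2

/-- `Dn(i)`: points outside the chain whose down-index is exactly `i`. -/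
def Dn [PartialOrder α] {h : ℕ} (c : Fin h → α) (i : ℕ) : Set α :=
  {z | z ∉ Set.range c ∧ dnN c z = i}

/-- `Ar(i, i+1)`: points outside the chain with `dn(z) ≤ i` and `up(z) ≥ i + 1`. -/
def Ar [PartialOrder α] {h : ℕ} (c : Fin h → α) (i : ℕ) : Set α :=
  {z | z ∉ Set.range c ∧ dnN c z ≤ i ∧ i + 1 ≤ upN c z}

/-!
An incomparable pair `(x, y)` always has `dn(y) < up(x)`, since otherwise
`x ≤ c_{up(x)} ≤ c_{dn(y)} ≤ y`; so a safe pair has `dn(y) ≤ dn(x)` or `up(y) ≤ up(x)`. Sorting `P`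
lexicographically by `dn`, with the chain element `c_t` placed between the blocks `Dn(t - 1)` and
`Dn(t)`, and ordering each block `Dn(i)` by one of `d_0` linear extensions reversing its
incomparable pairs, gives `d_0` linear extensions of `P` that reverse every incomparable pair with
`dn(y) ≤ dn(x)`; dually, `up` and the blocks `Up(u)` handle `up(y) ≤ up(x)`.

The blocks are convex, and of height at most `2k − 2`: in a chain inside `Dn(i)`, the elements
with `up ≤ i + k` could replace `c_{i+1}, …, c_{i+k−1}` in the maximum chain `C`, so there are at
most `k − 1` of them, while `k` elements with `up > i + k` would form a `k + k` with
`c_{i+1}, …, c_{i+k}` (and dually in `Up(u)`).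
-/

theorem Fin.mem_iff_lt_ncard_of_isLowerSet {h : ℕ} {S : Set (Fin h)} (hS : IsLowerSet S)
    (t : Fin h) : t ∈ S ↔ (t : ℕ) < S.ncard := by
  constructor
  · intro ht
    have hsub : (Finset.Iic t : Set (Fin h)) ⊆ S := fun s hs => hS (Finset.mem_Iic.mp hs) ht
    have := Set.ncard_le_ncard hsub
    rw [Set.ncard_coe_finset, Fin.card_Iic] at this
    omega
  · intro ht
    by_contra hn
    have hsub : S ⊆ (Finset.Iio t : Set (Fin h)) := fun s hs =>
      Finset.mem_Iio.mpr (lt_of_not_ge fun hts => hn (hS hts hs))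
    have := Set.ncard_le_ncard hsub
    rw [Set.ncard_coe_finset, Fin.card_Iio] at this
    omega

theorem Fin.mem_iff_sub_ncard_le_of_isUpperSet {h : ℕ} {S : Set (Fin h)} (hS : IsUpperSet S)
    (t : Fin h) : t ∈ S ↔ h - S.ncard ≤ (t : ℕ) := by
  have := Fin.mem_iff_lt_ncard_of_isLowerSet hS.compl t
  rw [Set.ncard_compl, Nat.card_eq_fintype_card, Fintype.card_fin] at this
  rw [← not_iff_not, ← Set.mem_compl_iff, this]
  omega

theorem Fin.card_filter_mem_Ico_le (h s t : ℕ) :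
    (Finset.univ.filter fun j : Fin h => s ≤ (j : ℕ) ∧ (j : ℕ) < t).card ≤ t - s :=
  (Finset.card_le_card_of_injOn Fin.val (fun j hj => by simp_all) Fin.val_injective.injOn).trans
    (Nat.card_Ico s t).le

section Chains

variable [PartialOrder α]

theorem heightSet_le {S : Set α} {m : ℕ}
    (H : ∀ t : Finset α, ↑t ⊆ S → IsChain (· ≤ ·) (t : Set α) → t.card ≤ m) :
    heightSet S ≤ m := by
  refine csSup_le ⟨0, ∅, by simp, by simp, rfl⟩ ?_
  rintro n ⟨t, hS, ht, rfl⟩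
  exact H t hS ht

theorem card_le_pheight [Fintype α] {t : Finset α} (ht : IsChain (· ≤ ·) (t : Set α)) :
    t.card ≤ pheight α :=
  le_csSup ⟨Fintype.card α, by rintro n ⟨s, -, -, rfl⟩; exact s.card_le_univ⟩
    ⟨t, Set.subset_univ _, ht, rfl⟩

theorem IsChain.finset_filter {T : Finset α} (hT : IsChain (· ≤ ·) (T : Set α))
    (p : α → Prop) [DecidablePred p] : IsChain (· ≤ ·) ((T.filter p : Finset α) : Set α) :=
  hT.mono (Finset.coe_subset.mpr (Finset.filter_subset p T))

theorem IsChain.exists_strictMono_fin {T : Finset α} (hT : IsChain (· ≤ ·) (T : Set α)) {k : ℕ}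
    (hk : k ≤ T.card) : ∃ f : Fin k → α, StrictMono f ∧ ∀ i, f i ∈ T := by
  classical
  let _ : LinearOrder (T : Set α) := hT.linearOrder
  let e := Fintype.orderIsoFinOfCardEq (T : Set α) (k := T.card) (by simp)
  exact ⟨fun i => (e (Fin.castLE hk i)).1,
    fun i j hij => e.strictMono (Fin.strictMono_castLE hk hij), fun i => (e _).2⟩

theorem card_lt_of_forall_incomparable {k : ℕ} (hexc : ¬ Nonempty (TwoChains k ↪o α))
    {g : Fin k → α} (hg : StrictMono g) {T : Finset α} (hT : IsChain (· ≤ ·) (T : Set α))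
    (hinc : ∀ a ∈ T, ∀ j, ¬ a ≤ g j ∧ ¬ g j ≤ a) : T.card < k := by
  by_contra! hk
  obtain ⟨f, hf, hfT⟩ := hT.exists_strictMono_fin hk
  refine hexc ⟨OrderEmbedding.ofMapLEIff (Sum.elim f g : TwoChains k → α) ?_⟩
  rintro (i | i) (j | j)
  · exact hf.le_iff_le
  · exact iff_of_false (hinc _ (hfT i) j).1 id
  · exact iff_of_false (hinc _ (hfT j) i).2 id
  · exact hg.le_iff_le

end Chains

section Realizers

variable {β : Type*} [PartialOrder β]

theorem exists_isLinExt_reversing {a b : β} (hab : ¬ a ≤ b) :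
    ∃ s : β → β → Prop, IsLinExt s ∧ s b a ∧ ¬ s a b := by
  let r : β → β → Prop := fun x y => x ≤ y ∨ (x ≤ b ∧ a ≤ y)
  have hr : IsPartialOrder β r := by
    refine { refl := fun x => .inl le_rfl, trans := ?_, antisymm := ?_ }
    · rintro x y z (h1 | ⟨h1, h2⟩) (h3 | ⟨h3, h4⟩)
      · exact .inl (h1.trans h3)
      · exact .inr ⟨h1.trans h3, h4⟩
      · exact .inr ⟨h1, h2.trans h3⟩
      · exact absurd (h2.trans h3) hab
    · rintro x y (h1 | ⟨h1, h2⟩) (h3 | ⟨h3, h4⟩)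
      · exact le_antisymm h1 h3
      · exact absurd (h4.trans (h1.trans h3)) hab
      · exact absurd (h2.trans (h3.trans h1)) hab
      · exact absurd (h2.trans h3) hab
  obtain ⟨s, hs, hrs⟩ := extend_partialOrder r
  have hba : s b a := hrs b a (.inr ⟨le_rfl, le_rfl⟩)
  exact ⟨s, ⟨hs, fun x y hxy => hrs x y (.inl hxy)⟩, hba,
    fun hab' => hab (hs.antisymm a b hab' hba).le⟩

theorem exists_isRealizer [Finite β] :
    ∃ d, 0 < d ∧ ∃ L : Fin d → β → β → Prop, IsRealizer L := by
  classical
  have := Fintype.ofFinite β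
  obtain ⟨s₀, hs₀, hs₀le⟩ := extend_partialOrder ((· ≤ ·) : β → β → Prop)
  have hs₀ : IsLinExt s₀ := ⟨hs₀, hs₀le⟩
  have hrev (p : β × β) : ∃ s, IsLinExt s ∧ (¬ p.1 ≤ p.2 → ¬ s p.1 p.2) :=
    if hp : p.1 ≤ p.2 then ⟨s₀, hs₀, fun h => (h hp).elim⟩
    else (exists_isLinExt_reversing hp).imp fun s hs => ⟨hs.1, fun _ => hs.2.2⟩
  choose F hF hFrev using hrev
  -- the extra index `none` keeps the family nonempty when `β` is empty
  let e := Fintype.equivFin (Option (β × β))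
  let L : Fin (Fintype.card (Option (β × β))) → β → β → Prop := fun j => (e.symm j).elim s₀ F
  have hL (j) : IsLinExt (L j) := by
    cases hj : e.symm j <;> simp only [L, hj, Option.elim_none, Option.elim_some, hs₀, hF]
  refine ⟨_, Fintype.card_pos, L, hL, fun x y => ⟨fun hxy j => (hL j).2 x y hxy, fun hall => ?_⟩⟩
  by_contra hxy
  have := hall (e (some (x, y)))
  simp only [L, Equiv.symm_apply_apply, Option.elim_some] at this
  exact hFrev (x, y) hxy this

theorem pdim_pos [Finite β] : 0 < pdim β :=
  (Nat.sInf_mem exists_isRealizer).1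

theorem realizerOn_incPairs_of_pdim_le [Finite β] {d : ℕ} (hd : pdim β ≤ d) :
    RealizerOn d (IncPairs β) := by
  obtain ⟨hpos, L, hLext, hL⟩ := Nat.sInf_mem (exists_isRealizer (β := β))
  change 0 < pdim β at hpos
  change Fin (pdim β) → β → β → Prop at L
  refine ⟨fun j => L ⟨j % pdim β, Nat.mod_lt _ hpos⟩, fun j => hLext _, ?_⟩
  rintro ⟨x, y⟩ ⟨hxy, -⟩
  obtain ⟨i, hi⟩ : ∃ i, ¬ L i x y := by
    by_contra! hall
    exact hxy ((hL x y).mpr hall)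
  have hmod : (⟨i % pdim β, Nat.mod_lt _ hpos⟩ : Fin (pdim β)) = i :=
    Fin.ext (Nat.mod_eq_of_lt i.2)
  refine ⟨Fin.castLE hd i, ?_⟩
  simp only [Fin.val_castLE, hmod]
  exact ⟨((hLext i).1.total x y).resolve_left hi, hi⟩

theorem RealizerOn.mono {d : ℕ} {S T : Set (β × β)} (h : RealizerOn d T) (hST : S ⊆ T) :
    RealizerOn d S :=
  let ⟨L, hL, hrev⟩ := h
  ⟨L, hL, fun p hp => hrev p (hST hp)⟩

theorem RealizerOn.union {d e : ℕ} {S T : Set (β × β)} (hS : RealizerOn d S)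
    (hT : RealizerOn e T) : RealizerOn (d + e) (S ∪ T) := by
  obtain ⟨L, hL, hLrev⟩ := hS
  obtain ⟨M, hM, hMrev⟩ := hT
  refine ⟨Fin.append L M, Fin.addCases (by simpa using hL) (by simpa using hM), ?_⟩
  rintro p (hp | hp)
  · obtain ⟨i, hi⟩ := hLrev p hp
    exact ⟨Fin.castAdd e i, by simpa using hi⟩
  · obtain ⟨i, hi⟩ := hMrev p hp
    exact ⟨Fin.natAdd d i, by simpa using hi⟩

end Realizers

section LexGlue

variable {β : Type*} [PartialOrder α] [LinearOrder β] {f : α → β}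

def lexGlue (f : α → β) (K : β → α → α → Prop) (x y : α) : Prop :=
  f x < f y ∨ (f x = f y ∧ K (f x) x y)

theorem isLinExt_lexGlue {K : β → α → α → Prop} (hf : Monotone f)
    (hK : ∀ b, IsLinExt (Function.onFun (K b) ((↑) : f ⁻¹' {b} → α))) :
    IsLinExt (lexGlue f K) := by
  have mem {x y : α} : f x = f y → x ∈ f ⁻¹' {f y} := id
  refine ⟨{ refl := ?_, trans := ?_, antisymm := ?_, total := ?_ }, ?_⟩
  · exact fun x => .inr ⟨rfl, (hK (f x)).1.refl ⟨x, rfl⟩⟩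
  · rintro x y z (hxy | ⟨hxy, kxy⟩) (hyz | ⟨hyz, kyz⟩)
    · exact .inl (hxy.trans hyz)
    · exact .inl (hyz ▸ hxy)
    · exact .inl (hxy ▸ hyz)
    · rw [← hxy] at kyz
      exact .inr ⟨hxy.trans hyz, (hK (f x)).1.trans ⟨x, rfl⟩ ⟨y, mem hxy.symm⟩
        ⟨z, mem (hxy.trans hyz).symm⟩ kxy kyz⟩
  · rintro x y (hxy | ⟨hxy, kxy⟩) (hyx | ⟨hyx, kyx⟩)
    · exact (lt_asymm hxy hyx).elim
    · exact (hxy.ne hyx.symm).elim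
    · exact (hyx.ne hxy.symm).elim
    · rw [← hxy] at kyx
      exact congrArg Subtype.val ((hK (f x)).1.antisymm ⟨x, rfl⟩ ⟨y, mem hxy.symm⟩ kxy kyx)
  · intro x y
    rcases lt_trichotomy (f x) (f y) with hxy | hxy | hxy
    · exact .inl (.inl hxy)
    · rcases (hK (f x)).1.total ⟨x, rfl⟩ ⟨y, mem hxy.symm⟩ with kxy | kyx
      · exact .inl (.inr ⟨hxy, kxy⟩)
      · exact .inr (.inr ⟨hxy.symm, hxy ▸ kyx⟩)
    · exact .inr (.inl hxy)
  · intro x y hle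
    rcases (hf hle).lt_or_eq with hxy | hxy
    · exact .inl hxy
    · exact .inr ⟨hxy, (hK (f x)).2 ⟨x, rfl⟩ ⟨y, mem hxy.symm⟩ hle⟩

theorem realizerOn_of_monotone [Finite α] {d : ℕ} (hf : Monotone f)
    (hfib : ∀ b, pdim (f ⁻¹' {b}) ≤ d) : RealizerOn d {p ∈ IncPairs α | f p.2 ≤ f p.1} := by
  choose L hLext hLrev using fun b => realizerOn_incPairs_of_pdim_le (hfib b)
  refine ⟨fun j => lexGlue f fun b => Relation.Map (L b j) (↑) (↑),
    fun j => isLinExt_lexGlue hf fun b => ?_, ?_⟩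
  · rw [Relation.onFun_map_eq_of_injective Subtype.val_injective]
    exact hLext b j
  rintro ⟨x, y⟩ ⟨hinc, hle⟩
  rcases hle.lt_or_eq with hlt | heq
  · refine ⟨⟨0, pdim_pos.trans_le (hfib (f x))⟩, .inl hlt, ?_⟩
    rintro (h | ⟨h, -⟩)
    exacts [lt_asymm h hlt, hlt.ne' h]
  · obtain ⟨j, hyx, hxy⟩ := hLrev (f x) (⟨x, rfl⟩, ⟨y, heq⟩) hinc
    refine ⟨j, .inr ⟨heq, heq ▸ ⟨_, _, hyx, rfl, rfl⟩⟩, ?_⟩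
    rintro (h | ⟨-, a, b, hab, ha, hb⟩)
    · exact heq.not_gt h
    · obtain rfl : a = ⟨x, rfl⟩ := Subtype.ext ha
      obtain rfl : b = ⟨y, heq⟩ := Subtype.ext hb
      exact hxy hab

end LexGlue

section ChainIndices

variable [PartialOrder α] {h : ℕ} {c : Fin h → α} {x y z : α}

theorem dnN_le (z : α) : dnN c z ≤ h := by
  simpa [dnN] using Set.ncard_le_card {i : Fin h | c i ≤ z}

theorem one_le_upN (z : α) : 1 ≤ upN c z := by
  have := Set.ncard_le_card {i : Fin h | z ≤ c i}
  simp only [Nat.card_eq_fintype_card, Fintype.card_fin] at this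
  unfold upN
  omega

theorem upN_le (z : α) : upN c z ≤ h + 1 := Nat.sub_le _ _

theorem dnN_mono : Monotone (dnN c) := fun _ _ hxy =>
  Set.ncard_le_ncard fun _ ht => le_trans ht hxy

theorem upN_mono : Monotone (upN c) := fun x y hxy => by
  have : {i : Fin h | y ≤ c i}.ncard ≤ {i : Fin h | x ≤ c i}.ncard :=
    Set.ncard_le_ncard fun _ ht => le_trans hxy ht
  unfold upN
  omega

theorem le_iff_lt_dnN (hc : StrictMono c) (t : Fin h) : c t ≤ z ↔ (t : ℕ) < dnN c z :=
  Fin.mem_iff_lt_ncard_of_isLowerSet (fun _ _ hst hs => le_trans (hc.monotone hst) hs) t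

theorem le_iff_upN_le (hc : StrictMono c) (t : Fin h) : z ≤ c t ↔ upN c z ≤ t + 1 :=
  (Fin.mem_iff_sub_ncard_le_of_isUpperSet (S := {i | z ≤ c i})
    (fun _ _ hst hs => le_trans hs (hc.monotone hst)) t).trans (by unfold upN; omega)

theorem dnN_apply (hc : StrictMono c) (t : Fin h) : dnN c (c t) = t + 1 := by
  have : {i : Fin h | c i ≤ c t} = ↑(Finset.Iic t) := by ext; simp [hc.le_iff_le]
  rw [dnN, this, Set.ncard_coe_finset, Fin.card_Iic]

theorem upN_apply (hc : StrictMono c) (t : Fin h) : upN c (c t) = t + 1 := by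
  have : {i : Fin h | c t ≤ c i} = ↑(Finset.Ici t) := by ext; simp [hc.le_iff_le]
  rw [upN, this, Set.ncard_coe_finset, Fin.card_Ici]
  omega

theorem dnN_injOn_range (hc : StrictMono c) : Set.InjOn (dnN c) (Set.range c) := by
  rintro _ ⟨s, rfl⟩ _ ⟨t, rfl⟩ hst
  rw [dnN_apply hc, dnN_apply hc] at hst
  exact congrArg c (Fin.ext (by omega))

theorem upN_injOn_range (hc : StrictMono c) : Set.InjOn (upN c) (Set.range c) := by
  rintro _ ⟨s, rfl⟩ _ ⟨t, rfl⟩ hst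
  rw [upN_apply hc, upN_apply hc] at hst
  exact congrArg c (Fin.ext (by omega))

theorem exists_le_le_of_upN_le_dnN (hc : StrictMono c) (hxy : upN c x ≤ dnN c y) :
    ∃ t, x ≤ c t ∧ c t ≤ y := by
  have := one_le_upN (c := c) x
  have := dnN_le (c := c) y
  refine ⟨⟨upN c x - 1, by omega⟩, (le_iff_upN_le hc _).mpr ?_, (le_iff_lt_dnN hc _).mpr ?_⟩ <;>
    simp only <;> omega

theorem dnN_lt_upN (hc : StrictMono c) (hz : z ∉ Set.range c) : dnN c z < upN c z := by
  by_contra! hle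
  obtain ⟨t, h1, h2⟩ := exists_le_le_of_upN_le_dnN hc hle
  exact hz ⟨t, le_antisymm h2 h1⟩

theorem le_of_mem_range_of_dnN_eq (hc : StrictMono c) (hx : x ∈ Set.range c)
    (hdn : dnN c x = dnN c y) : x ≤ y := by
  obtain ⟨t, rfl⟩ := hx
  rw [dnN_apply hc] at hdn
  exact (le_iff_lt_dnN hc t).mpr (by omega)

theorem le_of_mem_range_of_upN_eq (hc : StrictMono c) (hy : y ∈ Set.range c)
    (hup : upN c x = upN c y) : x ≤ y := by
  obtain ⟨t, rfl⟩ := hy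
  rw [upN_apply hc] at hup
  exact (le_iff_upN_le hc t).mpr (by omega)

theorem dnN_lt_dnN_of_le (hc : StrictMono c) (hx : x ∉ Set.range c) (hy : y ∈ Set.range c)
    (hxy : x ≤ y) : dnN c x < dnN c y := by
  obtain ⟨t, rfl⟩ := hy
  have := (le_iff_upN_le hc t).mp hxy
  have := dnN_lt_upN hc hx
  rw [dnN_apply hc]
  omega

theorem upN_lt_upN_of_le (hc : StrictMono c) (hx : x ∈ Set.range c) (hy : y ∉ Set.range c)
    (hxy : x ≤ y) : upN c x < upN c y := by
  obtain ⟨t, rfl⟩ := hx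
  have := (le_iff_lt_dnN hc t).mp hxy
  have := dnN_lt_upN hc hy
  rw [upN_apply hc]
  omega

end ChainIndices

def Up [PartialOrder α] {h : ℕ} (c : Fin h → α) (u : ℕ) : Set α :=
  {z | z ∉ Set.range c ∧ upN c z = u}

section BlockHeight

variable [PartialOrder α] {h k : ℕ} {c : Fin h → α}

/-- A chain off `C` that is comparable with every `c j`, `j ∉ I`, could replace `c '' I`
in `C`. -/
theorem card_le_card_of_forall_comparable
    (hmax : ∀ t : Finset α, IsChain (· ≤ ·) (t : Set α) → t.card ≤ h) (hc : StrictMono c)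
    {T : Finset α} (hT : IsChain (· ≤ ·) (T : Set α)) (hTc : ∀ a ∈ T, a ∉ Set.range c)
    (I : Finset (Fin h)) (hcomp : ∀ a ∈ T, ∀ j ∉ I, c j ≤ a ∨ a ≤ c j) : T.card ≤ I.card := by
  classical
  have hdisj : Disjoint T (Iᶜ.image c) :=
    Finset.disjoint_left.mpr fun a ha ha' =>
      hTc a ha (by obtain ⟨j, -, rfl⟩ := Finset.mem_image.mp ha'; exact ⟨j, rfl⟩)
  have hchain : IsChain (· ≤ ·) ((T ∪ Iᶜ.image c : Finset α) : Set α) := by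
    rw [Finset.coe_union, isChain_union]
    refine ⟨hT, hc.monotone.isChain_range.mono (by simp), ?_⟩
    intro a ha b hb _
    obtain ⟨j, hj, rfl⟩ := Finset.mem_image.mp hb
    exact (hcomp a ha j (Finset.mem_compl.mp hj)).symm
  have := hmax _ hchain
  rw [Finset.card_union_of_disjoint hdisj, Finset.card_image_of_injective _ hc.injective,
    Finset.card_compl, Fintype.card_fin] at this
  have := I.card_le_univ
  simp only [Fintype.card_fin] at this
  omega

theorem card_le_of_subset_Dn (hmax : ∀ t : Finset α, IsChain (· ≤ ·) (t : Set α) → t.card ≤ h)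
    (hc : StrictMono c) (hexc : ¬ Nonempty (TwoChains k ↪o α)) {i : ℕ} {T : Finset α}
    (hT : IsChain (· ≤ ·) (T : Set α)) (hTD : ↑T ⊆ Dn c i) : T.card ≤ 2 * k - 2 := by
  classical
  have hlow : (T.filter fun a => upN c a ≤ i + k).card ≤ k - 1 := by
    refine (card_le_card_of_forall_comparable hmax hc (hT.finset_filter _)
      (fun a ha => (hTD (Finset.mem_filter.mp ha).1).1)
      (Finset.univ.filter fun j : Fin h => i ≤ (j : ℕ) ∧ (j : ℕ) < i + k - 1) ?_).trans
      ((Fin.card_filter_mem_Ico_le _ _ _).trans (by omega))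
    intro a ha j hj
    obtain ⟨haT, hup⟩ := Finset.mem_filter.mp ha
    have hdn := (hTD haT).2
    simp only [Finset.mem_filter, Finset.mem_univ, true_and, not_and_or, not_le, not_lt] at hj
    rcases hj with hj | hj
    · exact .inl ((le_iff_lt_dnN hc j).mpr (by omega))
    · exact .inr ((le_iff_upN_le hc j).mpr (by omega))
  have hhigh : (T.filter fun a => ¬ upN c a ≤ i + k).card ≤ k - 1 := by
    set H := T.filter fun a => ¬ upN c a ≤ i + k
    rcases H.eq_empty_or_nonempty with hemp | ⟨a, ha⟩
    · simp [hemp]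
    have hik : i + k ≤ h := by
      have := upN_le (c := c) a
      have := (Finset.mem_filter.mp ha).2
      omega
    suffices H.card < k by omega
    refine card_lt_of_forall_incomparable hexc (g := fun j : Fin k => c ⟨i + j, by omega⟩)
      (fun j j' hjj => hc (by simpa using hjj)) (hT.finset_filter _) fun b hb j => ?_
    obtain ⟨hbT, hup⟩ := Finset.mem_filter.mp hb
    have hdn := (hTD hbT).2
    rw [le_iff_upN_le hc, le_iff_lt_dnN hc]
    simp only
    omega
  have := Finset.card_filter_add_card_filter_not (s := T) fun a => upN c a ≤ i + k
  omega

theorem card_le_of_subset_Up (hmax : ∀ t : Finset α, IsChain (· ≤ ·) (t : Set α) → t.card ≤ h)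
    (hc : StrictMono c) (hexc : ¬ Nonempty (TwoChains k ↪o α)) {u : ℕ} {T : Finset α}
    (hT : IsChain (· ≤ ·) (T : Set α)) (hTU : ↑T ⊆ Up c u) : T.card ≤ 2 * k - 2 := by
  classical
  have hhigh : (T.filter fun a => u - k ≤ dnN c a).card ≤ k - 1 := by
    refine (card_le_card_of_forall_comparable hmax hc (hT.finset_filter _)
      (fun a ha => (hTU (Finset.mem_filter.mp ha).1).1)
      (Finset.univ.filter fun j : Fin h => u - k ≤ (j : ℕ) ∧ (j : ℕ) < u - 1) ?_).trans
      ((Fin.card_filter_mem_Ico_le _ _ _).trans (by omega))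
    intro a ha j hj
    obtain ⟨haT, hdn⟩ := Finset.mem_filter.mp ha
    have hup := (hTU haT).2
    simp only [Finset.mem_filter, Finset.mem_univ, true_and, not_and_or, not_le, not_lt] at hj
    rcases hj with hj | hj
    · exact .inl ((le_iff_lt_dnN hc j).mpr (by omega))
    · exact .inr ((le_iff_upN_le hc j).mpr (by omega))
  have hlow : (T.filter fun a => ¬ u - k ≤ dnN c a).card ≤ k - 1 := by
    set H := T.filter fun a => ¬ u - k ≤ dnN c a
    rcases H.eq_empty_or_nonempty with hemp | ⟨a, ha⟩
    · simp [hemp]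
    have hku : k < u ∧ u ≤ h + 1 := by
      have := upN_le (c := c) a
      have := (Finset.mem_filter.mp ha).2
      have := (hTU (Finset.mem_filter.mp ha).1).2
      omega
    suffices H.card < k by omega
    refine card_lt_of_forall_incomparable hexc
      (g := fun j : Fin k => c ⟨u - k - 1 + j, by omega⟩)
      (fun j j' hjj => hc (by simpa using hjj)) (hT.finset_filter _) fun b hb j => ?_
    obtain ⟨hbT, hdn⟩ := Finset.mem_filter.mp hb
    have hup := (hTU hbT).2
    rw [le_iff_upN_le hc, le_iff_lt_dnN hc]
    simp only
    omega
  have := Finset.card_filter_add_card_filter_not (s := T) fun a => u - k ≤ dnN c a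
  omega

end BlockHeight

section Keys

variable [PartialOrder α] {h : ℕ} {c : Fin h → α} {x y : α}

open Classical in
/-- Places `c t` (whose `dn` is `t + 1`) between the blocks `Dn c t` and `Dn c (t + 1)`. -/
noncomputable def dnKey (c : Fin h → α) (z : α) : ℕ :=
  2 * dnN c z + if z ∈ Set.range c then 0 else 1

open Classical in
/-- Places `c t` (whose `up` is `t + 1`) between the blocks `Up c (t + 1)` and `Up c (t + 2)`. -/
noncomputable def upKey (c : Fin h → α) (z : α) : ℕ :=
  2 * upN c z + if z ∈ Set.range c then 1 else 0

theorem dnKey_mono (hc : StrictMono c) : Monotone (dnKey c) := by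
  intro x y hxy
  rcases (dnN_mono (c := c) hxy).lt_or_eq with hlt | heq
  · unfold dnKey; split_ifs <;> omega
  · have : y ∈ Set.range c → x ∈ Set.range c := fun hy =>
      by_contra fun hx => (dnN_lt_dnN_of_le hc hx hy hxy).ne heq
    unfold dnKey; split_ifs <;> simp_all

theorem upKey_mono (hc : StrictMono c) : Monotone (upKey c) := by
  intro x y hxy
  rcases (upN_mono (c := c) hxy).lt_or_eq with hlt | heq
  · unfold upKey; split_ifs <;> omega
  · have : x ∈ Set.range c → y ∈ Set.range c := fun hx =>
      by_contra fun hy => (upN_lt_upN_of_le hc hx hy hxy).ne heq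
    unfold upKey; split_ifs <;> simp_all

theorem dnKey_le_of_dnN_le (hc : StrictMono c) (hinc : (x, y) ∈ IncPairs α)
    (hdn : dnN c y ≤ dnN c x) : dnKey c y ≤ dnKey c x := by
  rcases hdn.lt_or_eq with hlt | heq
  · unfold dnKey; split_ifs <;> omega
  · have hx : x ∉ Set.range c := fun hx => hinc.1 (le_of_mem_range_of_dnN_eq hc hx heq.symm)
    have hy : y ∉ Set.range c := fun hy => hinc.2 (le_of_mem_range_of_dnN_eq hc hy heq)
    simp [dnKey, heq, hx, hy]

theorem upKey_le_of_upN_le (hc : StrictMono c) (hinc : (x, y) ∈ IncPairs α)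
    (hup : upN c y ≤ upN c x) : upKey c y ≤ upKey c x := by
  rcases hup.lt_or_eq with hlt | heq
  · unfold upKey; split_ifs <;> omega
  · have hx : x ∉ Set.range c := fun hx => hinc.2 (le_of_mem_range_of_upN_eq hc hx heq)
    have hy : y ∉ Set.range c := fun hy => hinc.1 (le_of_mem_range_of_upN_eq hc hy heq.symm)
    simp [upKey, heq, hx, hy]

theorem dnKey_le_or_upKey_le (hc : StrictMono c) (hinc : (x, y) ∈ IncPairs α)
    (hsafe : ¬ Dangerous c (x, y)) : dnKey c y ≤ dnKey c x ∨ upKey c y ≤ upKey c x := by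
  have hmid : dnN c y < upN c x := by
    by_contra! hle
    obtain ⟨t, h1, h2⟩ := exists_le_le_of_upN_le_dnN hc hle
    exact hinc.1 (h1.trans h2)
  by_cases hdn : dnN c y ≤ dnN c x
  · exact .inl (dnKey_le_of_dnN_le hc hinc hdn)
  · refine .inr (upKey_le_of_upN_le hc hinc ?_)
    by_contra hup
    exact hsafe ⟨(by omega : dnN c x < dnN c y), hmid, (by omega : upN c x < upN c y)⟩

theorem dnKey_fiber_subset_Dn_or_subsingleton (hc : StrictMono c) (b : ℕ) :
    dnKey c ⁻¹' {b} ⊆ Dn c (b / 2) ∨ (dnKey c ⁻¹' {b}).Subsingleton := by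
  rcases Nat.even_or_odd' b with ⟨m, rfl | rfl⟩
  · refine .inr fun z hz z' hz' => ?_
    simp only [Set.mem_preimage, Set.mem_singleton_iff, dnKey] at hz hz'
    split_ifs at hz hz' with h1 h2 <;> first | omega | exact dnN_injOn_range hc h1 h2 (by omega)
  · refine .inl fun z hz => ?_
    simp only [Set.mem_preimage, Set.mem_singleton_iff, dnKey] at hz
    split_ifs at hz with hzc
    · omega
    · exact ⟨hzc, by omega⟩

theorem upKey_fiber_subset_Up_or_subsingleton (hc : StrictMono c) (b : ℕ) :
    upKey c ⁻¹' {b} ⊆ Up c (b / 2) ∨ (upKey c ⁻¹' {b}).Subsingleton := by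
  rcases Nat.even_or_odd' b with ⟨m, rfl | rfl⟩
  · refine .inl fun z hz => ?_
    simp only [Set.mem_preimage, Set.mem_singleton_iff, upKey] at hz
    split_ifs at hz with hzc
    · omega
    · exact ⟨hzc, by omega⟩
  · refine .inr fun z hz z' hz' => ?_
    simp only [Set.mem_preimage, Set.mem_singleton_iff, upKey] at hz hz'
    split_ifs at hz hz' with h1 h2 <;> first | omega | exact upN_injOn_range hc h1 h2 (by omega)

end Keys

/-- If every convex subposet of height at most `2k − 2` has dimension at most `d_0`,
then at most `2 d_0` linear extensions reverse all safe incomparable pairs. -/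
theorem safe_pairs_reversed {α : Type*} [PartialOrder α] [Fintype α] (k : ℕ) (hk : 2 ≤ k)
    (hexc : ¬ Nonempty (TwoChains k ↪o α))
    (c : Fin (pheight α) → α) (hc : StrictMono c)
    (d0 : ℕ)
    (hconv : ∀ Q : Set α, Q.OrdConnected → heightSet Q ≤ 2 * k - 2 → pdim ↥Q ≤ d0) :
    RealizerOn (2 * d0) {p ∈ IncPairs α | ¬ Dangerous c p} := by
  have hmax (t : Finset α) : IsChain (· ≤ ·) (t : Set α) → t.card ≤ pheight α := card_le_pheight
  have hsingle {S : Set α} (hS : S.Subsingleton) : heightSet S ≤ 2 * k - 2 :=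
    heightSet_le fun t htS _ =>
      (Finset.card_le_one_iff_subsingleton.mpr (hS.anti htS)).trans (by omega)
  have hW : RealizerOn d0 {p ∈ IncPairs α | dnKey c p.2 ≤ dnKey c p.1} :=
    realizerOn_of_monotone (dnKey_mono hc) fun b =>
      hconv _ (Set.ordConnected_singleton.preimage_mono (dnKey_mono hc)) <|
        (dnKey_fiber_subset_Dn_or_subsingleton hc b).elim (fun hD => heightSet_le fun t htS ht =>
          card_le_of_subset_Dn hmax hc hexc ht (htS.trans hD)) hsingle
  have hV : RealizerOn d0 {p ∈ IncPairs α | upKey c p.2 ≤ upKey c p.1} :=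
    realizerOn_of_monotone (upKey_mono hc) fun b =>
      hconv _ (Set.ordConnected_singleton.preimage_mono (upKey_mono hc)) <|
        (upKey_fiber_subset_Up_or_subsingleton hc b).elim (fun hU => heightSet_le fun t htS ht =>
          card_le_of_subset_Up hmax hc hexc ht (htS.trans hU)) hsingle
  rw [two_mul]
  refine (hW.union hV).mono ?_
  rintro ⟨x, y⟩ ⟨hinc, hsafe⟩
  exact (dnKey_le_or_upKey_le hc hinc hsafe).imp (⟨hinc, ·⟩) (⟨hinc, ·⟩)
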